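/- Let n ≥ 1 and consider 2n points labeled 0, 1, …, 2n−1 placed in this circular order on a circle. Let M and N be two perfect matchings of these points (i.e., partitions of {0,…,2n−1} into n unordered pairs) that are both noncrossing, where a matching is noncrossing if no two of its pairs {a,b} and {c,d} interleave on the circle (i.e., it is not the case that exactly one of c, d lies strictly between a and b in circular order). Suppose that for every point p, the N-partner of p is greater than or equal to the M-partner of p with respect to the linear order on {0,…,2n−1} ∖ {p} obtained by traversing the circle starting just after p. Then M = N. -/
import Mathlib


/-- Cyclic distance from `p` to `q` on `m` points: the number of steps
counterclockwise from `p` to `q`, a natural number in `{0, …, m-1}`. -/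
def cdist (m : ℕ) (p q : Fin m) : ℕ := (q.val + m - p.val) % m

/-- `x` lies strictly between `a` and `b` in circular order (counterclockwise
from `a`). -/
def CircBtw (m : ℕ) (a b x : Fin m) : Prop :=
  0 < cdist m a x ∧ cdist m a x < cdist m a b

/-- A matching (involution) `σ` is noncrossing if no two of its chords
interleave on the circle: it is never the case that exactly one of `c, σ c`
lies strictly between `a` and `σ a`. -/
def Noncrossing {m : ℕ} (σ : Equiv.Perm (Fin m)) : Prop :=
  ∀ a c : Fin m, ¬ Xor' (CircBtw m a (σ a) c) (CircBtw m a (σ a) (σ c))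

lemma cdist_eq (m : ℕ) (p q : Fin m) :
    cdist m p q = if p.val ≤ q.val then q.val - p.val else q.val + m - p.val := by
  have hp := p.isLt
  have hq := q.isLt
  unfold cdist
  split_ifs with hle
  · have : q.val + m - p.val = (q.val - p.val) + m := by omega
    rw [this, Nat.add_mod_right]
    exact Nat.mod_eq_of_lt (by omega)
  · exact Nat.mod_eq_of_lt (by omega)

lemma cdist_add (m : ℕ) (p q : Fin m) (hpq : p ≠ q) :
    cdist m p q + cdist m q p = m := by
  have hp := p.isLt
  have hq := q.isLt
  have hne : p.val ≠ q.val := fun hv => hpq (Fin.ext hv)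
  rw [cdist_eq, cdist_eq]
  split_ifs <;> omega

lemma cdist_inj (m : ℕ) (p q r : Fin m) (h : cdist m p q = cdist m p r) : q = r := by
  have hp := p.isLt
  have hq := q.isLt
  have hr := r.isLt
  rw [cdist_eq, cdist_eq] at h
  apply Fin.ext
  split_ifs at h <;> omega

lemma sum_cdist (m : ℕ) (σ : Equiv.Perm (Fin m))
    (hinv : Function.Involutive σ) (hfpf : ∀ p, σ p ≠ p) :
    2 * ∑ p : Fin m, cdist m p (σ p) = m * m := by
  have key : ∑ p : Fin m, cdist m (σ p) p = ∑ p : Fin m, cdist m p (σ p) := by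
    have := Equiv.sum_comp σ (fun p => cdist m p (σ p))
    calc ∑ p : Fin m, cdist m (σ p) p
        = ∑ p : Fin m, cdist m (σ p) (σ (σ p)) := by
          apply Finset.sum_congr rfl; intro p _; rw [hinv p]
      _ = ∑ p : Fin m, cdist m p (σ p) := this
  calc 2 * ∑ p : Fin m, cdist m p (σ p)
      = ∑ p : Fin m, (cdist m p (σ p) + cdist m (σ p) p) := by
        rw [Finset.sum_add_distrib, key]; ring
    _ = ∑ _p : Fin m, m := by
        apply Finset.sum_congr rfl; intro p _
        exact cdist_add m p (σ p) (fun e => hfpf p e.symm)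
    _ = m * m := by simp [Finset.sum_const, mul_comm]

/-- two noncrossing perfect matchings `M`, `N` of `2n` points on a
circle such that, for every point `p`, the `N`-partner of `p` is ≥ the
`M`-partner of `p` in the linear order based just after `p`, are equal. -/
theorem noncrossing_matchings_pointwise_le_eq
    (n : ℕ) (hn : 1 ≤ n)
    (M N : Equiv.Perm (Fin (2 * n)))
    (hMinv : Function.Involutive M) (hMfpf : ∀ p, M p ≠ p)
    (hNinv : Function.Involutive N) (hNfpf : ∀ p, N p ≠ p)
    (hMnc : Noncrossing M) (hNnc : Noncrossing N)
    (h : ∀ p : Fin (2 * n), cdist (2 * n) p (M p) ≤ cdist (2 * n) p (N p)) :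
    M = N := by
  have hsum : ∑ p : Fin (2 * n), cdist (2 * n) p (M p)
      = ∑ p : Fin (2 * n), cdist (2 * n) p (N p) := by
    have h1 := sum_cdist (2 * n) M hMinv hMfpf
    have h2 := sum_cdist (2 * n) N hNinv hNfpf
    omega
  have heq : ∀ p ∈ Finset.univ, cdist (2 * n) p (M p) = cdist (2 * n) p (N p) :=
    (Finset.sum_eq_sum_iff_of_le (fun p _ => h p)).mp hsum
  ext p
  have := cdist_inj (2 * n) p (M p) (N p) (heq p (Finset.mem_univ p))
  exact congrArg Fin.val this
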